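/- arXiv:2106.08135 — 4 statements merged into one kernel-verified Lean document; each statement's English description precedes it below -/
import Mathlib

section
/- Let q > 2 and α ∈ (0, 1/2]. Define A₁ = Σ_{k≥0} [ (2k+2α)^{-q} + (2k+2-2α)^{-q} ], A₂ = Σ_{k≥0} [ (2k+2α)^{-(q-2)} + (2k+2-2α)^{-(q-2)} - 2(2k+2)^{-(q-2)} ], and A₃ = Σ_{k≥0} [ (2k+2α)^{-(q-1)} - (2k+2-2α)^{-(q-1)} ]. Then A₃² ≤ (2α)^{-(2q-2)} and A₁·A₂ ≥ (2α)^{-(2q-2)} + (2α)^{-q} · Σ_{k≥1} [ (2k+2α)^{-(q-2)} + (2k-2α)^{-(q-2)} - 2(2k)^{-(q-2)} ]; in particular A₁·A₂ ≥ A₃². -/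
open Real Set Filter Topology

lemma tele_hasSum (g : ℕ → ℝ) (hmono : ∀ k, g (k+1) ≤ g k)
    (h0 : Tendsto g atTop (𝓝 0)) : HasSum (fun k => g k - g (k+1)) (g 0) := by
  have hnn : ∀ k, 0 ≤ g k - g (k+1) := fun k => sub_nonneg.2 (hmono k)
  rw [hasSum_iff_tendsto_nat_of_nonneg hnn]
  have h : ∀ n, ∑ i ∈ Finset.range n, (g i - g (i+1)) = g 0 - g n :=
    fun n => Finset.sum_range_sub' g n
  simp only [h]
  simpa using tendsto_const_nhds.sub h0

lemma tend0 (p c : ℝ) (hp : 0 < p) :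
    Tendsto (fun k : ℕ => (2*(k:ℝ)+c)^(-p)) atTop (𝓝 0) := by
  apply (tendsto_rpow_neg_atTop hp).comp
  apply Filter.tendsto_atTop_add_const_right
  exact (tendsto_natCast_atTop_atTop).const_mul_atTop two_pos

lemma summ_aux (p c : ℝ) (hp : 1 < p) (hc : 0 < c) (hc2 : c ≤ 2) :
    Summable (fun k : ℕ => (2*(k:ℝ)+c)^(-p)) := by
  have hbase : Summable (fun k : ℕ => c^(-p) * ((k:ℝ)+1)^(-p)) := by
    apply Summable.mul_left
    have := (Real.summable_nat_rpow (p := -p)).2 (by linarith)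
    have h2 := (summable_nat_add_iff 1).2 this
    refine h2.congr fun n => ?_
    push_cast
    ring_nf
  refine Summable.of_nonneg_of_le (fun k => rpow_nonneg (by positivity) _) (fun k => ?_) hbase
  have h1 : (0:ℝ) < c * ((k:ℝ)+1) := by positivity
  have h2 : c * ((k:ℝ)+1) ≤ 2*(k:ℝ)+c := by nlinarith [Nat.cast_nonneg (α := ℝ) k]
  calc (2*(k:ℝ)+c)^(-p) ≤ (c * ((k:ℝ)+1))^(-p) :=
        rpow_le_rpow_of_nonpos h1 h2 (by linarith)
    _ = c^(-p) * ((k:ℝ)+1)^(-p) := mul_rpow hc.le (by positivity)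

lemma convex_ineq (p m β : ℝ) (hp : 0 ≤ p) (hβ : 0 < β) (hm : β < m) :
    2 * m^(-p) ≤ (m-β)^(-p) + (m+β)^(-p) := by
  have hm0 : 0 < m := hβ.trans hm
  have hab : (0:ℝ) < (m-β)*(m+β) := by nlinarith
  have hx : (0:ℝ) ≤ (m-β)^(-p) := rpow_nonneg (by linarith) _
  have hy : (0:ℝ) ≤ (m+β)^(-p) := rpow_nonneg (by linarith) _
  have hsq : Real.sqrt ((m-β)^(-p) * (m+β)^(-p)) ≤ ((m-β)^(-p) + (m+β)^(-p)) / 2 := by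
    nlinarith [Real.sq_sqrt (mul_nonneg hx hy), Real.sqrt_nonneg ((m-β)^(-p) * (m+β)^(-p)),
      sq_nonneg ((m-β)^(-p) - (m+β)^(-p)), sq_nonneg (Real.sqrt ((m-β)^(-p) * (m+β)^(-p)))]
  have h1 : (m-β)^(-p) * (m+β)^(-p) = ((m-β)*(m+β))^(-p) :=
    (mul_rpow (by linarith) (by linarith)).symm
  have h2 : ((m-β)*(m+β))^(-p) ≥ (m^2)^(-p) := by
    apply rpow_le_rpow_of_nonpos hab (by nlinarith) (by linarith)
  have h3 : Real.sqrt ((m^2)^(-p)) = m^(-p) := by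
    rw [sq, mul_rpow hm0.le hm0.le, Real.sqrt_mul_self (rpow_nonneg hm0.le _)]
  have h4 : Real.sqrt ((m^2)^(-p)) ≤ Real.sqrt ((m-β)^(-p) * (m+β)^(-p)) := by
    rw [h1]; exact Real.sqrt_le_sqrt h2
  rw [h3] at h4
  linarith
theorem stmt6 (q α : ℝ) (hq : 2 < q) (hα : α ∈ Set.Ioc (0:ℝ) (1/2))
    (A₁ A₂ A₃ : ℝ)
    (hA₁ : A₁ = ∑' k : ℕ, ((2*(k:ℝ)+2*α)^(-q) + (2*(k:ℝ)+2-2*α)^(-q)))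
    (hA₂ : A₂ = ∑' k : ℕ,
      ((2*(k:ℝ)+2*α)^(-(q-2)) + (2*(k:ℝ)+2-2*α)^(-(q-2)) - 2*(2*(k:ℝ)+2)^(-(q-2))))
    (hA₃ : A₃ = ∑' k : ℕ, ((2*(k:ℝ)+2*α)^(-(q-1)) - (2*(k:ℝ)+2-2*α)^(-(q-1)))) :
    A₃^2 ≤ (2*α)^(-(2*q-2)) ∧
    A₁ * A₂ ≥ (2*α)^(-(2*q-2)) + (2*α)^(-q) *
      ∑' k : ℕ, ((2*((k:ℝ)+1)+2*α)^(-(q-2)) + (2*((k:ℝ)+1)-2*α)^(-(q-2))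
        - 2*(2*((k:ℝ)+1))^(-(q-2))) ∧
    A₁ * A₂ ≥ A₃^2 := by
  obtain ⟨hα0, hα2⟩ := hα
  have hβ : (0:ℝ) < 2*α := by linarith
  have hβ1 : 2*α ≤ 1 := by linarith
  -- telescoping sums
  have mkTel : ∀ p c : ℝ, 0 < p → 0 < c →
      HasSum (fun k : ℕ => (2*(k:ℝ)+c)^(-p) - (2*((k:ℝ)+1)+c)^(-p)) (c^(-p)) := by
    intro p c hp hc
    have key := tele_hasSum (fun k : ℕ => (2*(k:ℝ)+c)^(-p))
      (fun k => by
        have hk : (0:ℝ) ≤ k := Nat.cast_nonneg k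
        apply rpow_le_rpow_of_nonpos (by linarith) (by push_cast; linarith) (by linarith))
      (tend0 p c hp)
    simp only [Nat.cast_add, Nat.cast_one, Nat.cast_zero] at key
    norm_num at key
    exact key
  -- A₃ bounds
  have htel3 := mkTel (q-1) (2*α) (by linarith) hβ
  have ha0 : ∀ k : ℕ, 0 ≤ (2*(k:ℝ)+2*α)^(-(q-1)) - (2*(k:ℝ)+2-2*α)^(-(q-1)) := by
    intro k
    have hk : (0:ℝ) ≤ k := Nat.cast_nonneg k
    have := rpow_le_rpow_of_nonpos (x := 2*(k:ℝ)+2*α) (y := 2*(k:ℝ)+2-2*α)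
      (by linarith) (by linarith) (z := -(q-1)) (by linarith)
    linarith
  have hale : ∀ k : ℕ, (2*(k:ℝ)+2*α)^(-(q-1)) - (2*(k:ℝ)+2-2*α)^(-(q-1)) ≤
      (2*(k:ℝ)+2*α)^(-(q-1)) - (2*((k:ℝ)+1)+2*α)^(-(q-1)) := by
    intro k
    have hk : (0:ℝ) ≤ k := Nat.cast_nonneg k
    have := rpow_le_rpow_of_nonpos (x := 2*(k:ℝ)+2-2*α) (y := 2*((k:ℝ)+1)+2*α)
      (by linarith) (by linarith) (z := -(q-1)) (by linarith)
    linarith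
  have hSa : Summable (fun k : ℕ => (2*(k:ℝ)+2*α)^(-(q-1)) - (2*(k:ℝ)+2-2*α)^(-(q-1))) :=
    Summable.of_nonneg_of_le ha0 hale htel3.summable
  have hA3le : A₃ ≤ (2*α)^(-(q-1)) := by
    rw [hA₃, ← htel3.tsum_eq]
    exact Summable.tsum_le_tsum hale hSa htel3.summable
  have hA3nn : 0 ≤ A₃ := by rw [hA₃]; exact tsum_nonneg ha0
  have goal1 : A₃^2 ≤ (2*α)^(-(2*q-2)) := by
    have h := pow_le_pow_left₀ hA3nn hA3le 2
    have heq : ((2*α)^(-(q-1)))^2 = (2*α)^(-(2*q-2)) := by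
      rw [sq, ← rpow_add hβ, show -(q-1)+-(q-1) = -(2*q-2) by ring]
    linarith [heq ▸ h]
  -- A₁ lower bound
  have hS1a := summ_aux q (2*α) (by linarith) hβ (by linarith)
  have hS1b' := summ_aux q (2-2*α) (by linarith) (by linarith) (by linarith)
  have hS1b : Summable (fun k : ℕ => (2*(k:ℝ)+2-2*α)^(-q)) := by
    refine hS1b'.congr fun k => ?_
    rw [show 2*(k:ℝ)+(2-2*α) = 2*(k:ℝ)+2-2*α by ring]
  have hS1 := hS1a.add hS1b
  have hA1ge : (2*α)^(-q) ≤ A₁ := by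
    rw [hA₁]
    have h0 := Summable.le_tsum hS1 0 (fun i _ => by
      have hk : (0:ℝ) ≤ i := Nat.cast_nonneg i
      have n1 : (0:ℝ) ≤ (2*(i:ℝ)+2*α)^(-q) := rpow_nonneg (by linarith) _
      have n2 : (0:ℝ) ≤ (2*(i:ℝ)+2-2*α)^(-q) := rpow_nonneg (by linarith) _
      linarith)
    have n2 : (0:ℝ) ≤ (2*((0:ℕ):ℝ)+2-2*α)^(-q) := rpow_nonneg (by norm_num; linarith) _
    have : (2*((0:ℕ):ℝ)+2*α)^(-q) = (2*α)^(-q) := by norm_num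
    push_cast at h0 n2 ⊢
    norm_num at h0 n2 ⊢
    linarith
  -- A₂ decomposition
  have htel2 := mkTel (q-2) (2*α) (by linarith) hβ
  have htel2' := mkTel (q-2) (2-2*α) (by linarith) (by linarith)
  set u : ℕ → ℝ := fun k => (2*((k:ℝ)+1)+2*α)^(-(q-2)) + (2*((k:ℝ)+1)-2*α)^(-(q-2))
      - 2*(2*((k:ℝ)+1))^(-(q-2)) with hu
  have hu0 : ∀ k, 0 ≤ u k := by
    intro k
    have hk : (0:ℝ) ≤ k := Nat.cast_nonneg k
    have := convex_ineq (q-2) (2*((k:ℝ)+1)) (2*α) (by linarith) hβ (by linarith)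
    simp only [hu]
    linarith
  have hu_le : ∀ k, u k ≤ (2*(k:ℝ)+(2-2*α))^(-(q-2)) - (2*((k:ℝ)+1)+(2-2*α))^(-(q-2)) := by
    intro k
    have hk : (0:ℝ) ≤ k := Nat.cast_nonneg k
    have e1 : (2*((k:ℝ)+1)+2*α)^(-(q-2)) ≤ (2*((k:ℝ)+1))^(-(q-2)) :=
      rpow_le_rpow_of_nonpos (by linarith) (by linarith) (by linarith)
    have e2 : (2*((k:ℝ)+1)+(2-2*α))^(-(q-2)) ≤ (2*((k:ℝ)+1)+2*α)^(-(q-2)) :=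
      rpow_le_rpow_of_nonpos (by linarith) (by linarith) (by linarith)
    have hb1 : (2*(k:ℝ)+(2-2*α)) = 2*((k:ℝ)+1)-2*α := by ring
    rw [hb1]
    simp only [hu]
    linarith
  have htel2'' : HasSum (fun k : ℕ => (2*(k:ℝ)+(2-2*α))^(-(q-2)) -
      (2*((k:ℝ)+1)+(2-2*α))^(-(q-2))) ((2-2*α)^(-(q-2))) := by
    refine htel2'.congr_fun fun k => ?_
    rw [show 2*(k:ℝ)+(2-2*α) = 2*(k:ℝ)+2-2*α by ring,
        show 2*((k:ℝ)+1)+(2-2*α) = 2*((k:ℝ)+1)+2-2*α by ring]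
  have hSu : Summable u := Summable.of_nonneg_of_le hu0 hu_le htel2''.summable
  have hA2eq : A₂ = (2*α)^(-(q-2)) + ∑' k, u k := by
    rw [hA₂]
    have hpt : ∀ k : ℕ, (2*(k:ℝ)+2*α)^(-(q-2)) + (2*(k:ℝ)+2-2*α)^(-(q-2))
        - 2*(2*(k:ℝ)+2)^(-(q-2)) =
        ((2*(k:ℝ)+2*α)^(-(q-2)) - (2*((k:ℝ)+1)+2*α)^(-(q-2))) + u k := by
      intro k
      simp only [hu]
      rw [show 2*(k:ℝ)+2-2*α = 2*((k:ℝ)+1)-2*α by ring,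
          show 2*(k:ℝ)+2 = 2*((k:ℝ)+1) by ring]
      ring
    rw [tsum_congr hpt, Summable.tsum_add htel2.summable hSu, htel2.tsum_eq]
  have hT0 : 0 ≤ ∑' k, u k := tsum_nonneg hu0
  have hA2nn : 0 ≤ A₂ := by
    rw [hA2eq]
    have := rpow_nonneg hβ.le (-(q-2))
    linarith
  have hmul : (2*α)^(-q) * (2*α)^(-(q-2)) = (2*α)^(-(2*q-2)) := by
    rw [← rpow_add hβ, show -q + -(q-2) = -(2*q-2) by ring]
  have goal2 : A₁ * A₂ ≥ (2*α)^(-(2*q-2)) + (2*α)^(-q) * ∑' k, u k := by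
    have step : (2*α)^(-q) * A₂ ≤ A₁ * A₂ := mul_le_mul_of_nonneg_right hA1ge hA2nn
    have expand : (2*α)^(-q) * A₂ = (2*α)^(-(2*q-2)) + (2*α)^(-q) * ∑' k, u k := by
      rw [hA2eq, mul_add, hmul]
    linarith
  refine ⟨goal1, goal2, ?_⟩
  have hTnn : 0 ≤ (2*α)^(-q) * ∑' k, u k := mul_nonneg (rpow_nonneg hβ.le _) hT0
  linarith
end

section
/- Let q ≥ 3, C₁ > 0, and define C(q,α,s) = (2C₁/((q-1)(q-2))) Σ_{k≥0} [ (2k+2α+s)^{-(q-2)} + (2k+2-2α+s)^{-(q-2)} - 2(2k+2+s)^{-(q-2)} ] for α ∈ (0,1/2] and s ≥ 0. Then there exists a constant C > 0 depending only on q and C₁ such that for all α ∈ (0,1/2] and all s ∈ [0,α], |C(q,α,s) - C(q,α,0)| ≤ C · s · α^{-(q-1)}. -/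
/-!
Write `p = q - 2 > 0`. By the mean value theorem for `x ↦ x ^ (-p)`, moving an argument
`x ≥ α (k + 1)` by `h ≥ 0` changes `x ^ (-p)` by at most `p h α ^ (-(p+1)) (k + 1) ^ (-(p+1))`.
All arguments of the `k`-th term are at least `α (k + 1)` when `α ≤ 1/2`. Shifting each of them
by `s` bounds the `k`-th term of `C(q,α,s) - C(q,α,0)` by `4 p s α ^ (-(p+1)) (k + 1) ^ (-(p+1))`,
and since `p + 1 > 1` these bounds sum to a constant multiple of `s α ^ (-(p+1))`. Comparing the
first two arguments with the third one instead shows that the series converges at all.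
-/

open Real Set

lemma abs_rpow_neg_sub_rpow_neg_le {p a b : ℝ} (hp : 0 < p) (ha : 0 < a) (hab : a ≤ b) :
    |b ^ (-p) - a ^ (-p)| ≤ p * a ^ (-(p + 1)) * (b - a) := by
  have hderiv : ∀ x ∈ Icc a b,
      HasDerivWithinAt (fun x : ℝ => x ^ (-p)) (-p * x ^ (-p - 1)) (Icc a b) x := fun x hx =>
    (hasDerivAt_rpow_const (Or.inl (ha.trans_le hx.1).ne')).hasDerivWithinAt
  have hbound : ∀ x ∈ Icc a b, ‖-p * x ^ (-p - 1)‖ ≤ p * a ^ (-(p + 1)) := by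
    intro x hx
    rw [norm_mul, norm_neg, norm_of_nonneg hp.le,
      norm_of_nonneg (rpow_nonneg (ha.trans_le hx.1).le _), neg_sub_left, add_comm]
    exact mul_le_mul_of_nonneg_left (rpow_le_rpow_of_nonpos ha hx.1 (by linarith)) hp.le
  simpa [norm_of_nonneg (sub_nonneg.2 hab)] using
    (convex_Icc a b).norm_image_sub_le_of_norm_hasDerivWithin_le hderiv hbound
      (left_mem_Icc.2 hab) (right_mem_Icc.2 hab)

lemma abs_rpow_neg_sub_rpow_neg_le_of_mul_succ_le {p α a b : ℝ} {k : ℕ} (hp : 0 < p)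
    (hα : 0 < α) (ha : α * (k + 1) ≤ a) (hab : a ≤ b) :
    |b ^ (-p) - a ^ (-p)| ≤ p * (α ^ (-(p + 1)) * ((k : ℝ) + 1) ^ (-(p + 1))) * (b - a) := by
  have hm : 0 < α * (k + 1) := by positivity
  rw [← mul_rpow hα.le (by positivity)]
  calc |b ^ (-p) - a ^ (-p)| ≤ p * a ^ (-(p + 1)) * (b - a) :=
        abs_rpow_neg_sub_rpow_neg_le hp (hm.trans_le ha) hab
    _ ≤ p * (α * (k + 1)) ^ (-(p + 1)) * (b - a) :=
        mul_le_mul_of_nonneg_right (mul_le_mul_of_nonneg_left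
          (rpow_le_rpow_of_nonpos hm ha (by linarith)) hp.le) (sub_nonneg.2 hab)

lemma summable_nat_add_one_rpow_neg_add_one {p : ℝ} (hp : 0 < p) :
    Summable fun k : ℕ => ((k : ℝ) + 1) ^ (-(p + 1)) := by
  simpa using (summable_nat_add_iff 1).2 (summable_nat_rpow.2 (by linarith : -(p + 1) < -1))

/-- The `k`-th term of the series defining `C(q, α, s)`, with `p = q - 2`. -/
noncomputable def seriesTerm (p α s : ℝ) (k : ℕ) : ℝ :=
  (2 * k + 2 * α + s) ^ (-p) + (2 * k + 2 - 2 * α + s) ^ (-p) - 2 * (2 * k + 2 + s) ^ (-p)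

section seriesTerm

variable {p α : ℝ}

lemma abs_seriesTerm_le (hp : 0 < p) (hα : α ∈ Ioc (0 : ℝ) (1 / 2)) {t : ℝ} (ht : 0 ≤ t)
    (k : ℕ) :
    |seriesTerm p α t k| ≤ 2 * p * α ^ (-(p + 1)) * ((k : ℝ) + 1) ^ (-(p + 1)) := by
  obtain ⟨hα0, hα2⟩ := hα
  have hk : α * k ≤ 2 * k := mul_le_mul_of_nonneg_right (by linarith) k.cast_nonneg
  set d : ℝ → ℝ := fun a => a ^ (-p) - (2 * k + 2 + t) ^ (-p) with hd
  have compare (a : ℝ) (ha : α * (k + 1) ≤ a) (hat : a ≤ 2 * k + 2 + t) :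
      |d a| ≤ p * (α ^ (-(p + 1)) * ((k : ℝ) + 1) ^ (-(p + 1))) * (2 * k + 2 + t - a) := by
    simpa only [hd, abs_sub_comm] using
      abs_rpow_neg_sub_rpow_neg_le_of_mul_succ_le hp hα0 ha hat
  have hsplit : seriesTerm p α t k = d (2 * k + 2 * α + t) + d (2 * k + 2 - 2 * α + t) := by
    simp only [seriesTerm, hd]; ring
  have h₁ := compare (2 * k + 2 * α + t) (by linarith) (by linarith)
  have h₂ := compare (2 * k + 2 - 2 * α + t) (by linarith) (by linarith)
  rw [hsplit]
  linarith [abs_add_le (d (2 * k + 2 * α + t)) (d (2 * k + 2 - 2 * α + t))]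

lemma abs_seriesTerm_sub_seriesTerm_zero_le (hp : 0 < p) (hα : α ∈ Ioc (0 : ℝ) (1 / 2))
    {s : ℝ} (hs : 0 ≤ s) (k : ℕ) :
    |seriesTerm p α s k - seriesTerm p α 0 k|
      ≤ 4 * p * s * α ^ (-(p + 1)) * ((k : ℝ) + 1) ^ (-(p + 1)) := by
  obtain ⟨hα0, hα2⟩ := hα
  have hk : α * k ≤ 2 * k := mul_le_mul_of_nonneg_right (by linarith) k.cast_nonneg
  set d : ℝ → ℝ := fun a => (a + s) ^ (-p) - a ^ (-p) with hd
  have shift (a : ℝ) (ha : α * (k + 1) ≤ a) :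
      |d a| ≤ p * (α ^ (-(p + 1)) * ((k : ℝ) + 1) ^ (-(p + 1))) * s := by
    simpa only [hd, add_sub_cancel_left] using
      abs_rpow_neg_sub_rpow_neg_le_of_mul_succ_le hp hα0 ha (le_add_of_nonneg_right hs)
  have hsplit : seriesTerm p α s k - seriesTerm p α 0 k =
      d (2 * k + 2 * α) + d (2 * k + 2 - 2 * α) - 2 * d (2 * k + 2) := by
    simp only [seriesTerm, hd, add_zero]; ring
  have h₁ := shift (2 * k + 2 * α) (by linarith)
  have h₂ := shift (2 * k + 2 - 2 * α) (by linarith)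
  have h₃ := shift (2 * k + 2) (by linarith)
  rw [hsplit]
  calc |d (2 * k + 2 * α) + d (2 * k + 2 - 2 * α) - 2 * d (2 * k + 2)|
      ≤ |d (2 * k + 2 * α)| + |d (2 * k + 2 - 2 * α)| + 2 * |d (2 * k + 2)| := by
        refine (abs_sub _ _).trans ?_
        rw [abs_mul, abs_two]
        exact add_le_add_left (abs_add_le _ _) _
    _ ≤ 4 * p * s * α ^ (-(p + 1)) * ((k : ℝ) + 1) ^ (-(p + 1)) := by linarith

lemma summable_seriesTerm (hp : 0 < p) (hα : α ∈ Ioc (0 : ℝ) (1 / 2)) {t : ℝ} (ht : 0 ≤ t) :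
    Summable (seriesTerm p α t) := by
  exact ((summable_nat_add_one_rpow_neg_add_one hp).mul_left _).of_norm_bounded
    fun k => abs_seriesTerm_le hp hα ht k

lemma exists_abs_tsum_seriesTerm_sub_le (hp : 0 < p) :
    ∃ K > 0, ∀ α ∈ Ioc (0 : ℝ) (1 / 2), ∀ s, 0 ≤ s →
      |∑' k, seriesTerm p α s k - ∑' k, seriesTerm p α 0 k| ≤ K * s * α ^ (-(p + 1)) := by
  have hsum := summable_nat_add_one_rpow_neg_add_one hp
  set S := ∑' k : ℕ, ((k : ℝ) + 1) ^ (-(p + 1))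
  have hS : 0 < S := hsum.tsum_pos (fun k => by positivity) 0 (by simp)
  refine ⟨4 * p * S, by positivity, fun α hα s hs => ?_⟩
  have hdiff := (summable_seriesTerm hp hα hs).sub (summable_seriesTerm hp hα le_rfl)
  rw [← (summable_seriesTerm hp hα hs).tsum_sub (summable_seriesTerm hp hα le_rfl)]
  calc |∑' k, (seriesTerm p α s k - seriesTerm p α 0 k)|
      ≤ ∑' k, |seriesTerm p α s k - seriesTerm p α 0 k| := by
        simpa only [norm_eq_abs] using norm_tsum_le_tsum_norm hdiff.norm
    _ ≤ ∑' k : ℕ, 4 * p * s * α ^ (-(p + 1)) * ((k : ℝ) + 1) ^ (-(p + 1)) :=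
        hdiff.abs.tsum_le_tsum (abs_seriesTerm_sub_seriesTerm_zero_le hp hα hs) (hsum.mul_left _)
    _ = 4 * p * S * s * α ^ (-(p + 1)) := by rw [tsum_mul_left]; ring

end seriesTerm

theorem stmt10 (q C₁ : ℝ) (hq : 3 ≤ q) (hC₁ : 0 < C₁)
    (Cfun : ℝ → ℝ → ℝ)
    (hCfun : ∀ α s : ℝ, Cfun α s = (2*C₁/((q-1)*(q-2))) *
      ∑' k : ℕ, ((2*(k:ℝ)+2*α+s)^(-(q-2)) + (2*(k:ℝ)+2-2*α+s)^(-(q-2))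
        - 2*(2*(k:ℝ)+2+s)^(-(q-2)))) :
    ∃ C > 0, ∀ α ∈ Set.Ioc (0:ℝ) (1/2), ∀ s ∈ Set.Icc (0:ℝ) α,
      |Cfun α s - Cfun α 0| ≤ C * s * α^(-(q-1)) := by
  have hp : 0 < q - 2 := by linarith
  have hc : 0 < 2 * C₁ / ((q - 1) * (q - 2)) := by
    apply div_pos (by linarith) (mul_pos (by linarith) hp)
  obtain ⟨K, hK, hbound⟩ := exists_abs_tsum_seriesTerm_sub_le hp
  refine ⟨2 * C₁ / ((q - 1) * (q - 2)) * K, mul_pos hc hK, fun α hα s hs => ?_⟩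
  have hCfun' (t : ℝ) :
      Cfun α t = 2 * C₁ / ((q - 1) * (q - 2)) * ∑' k, seriesTerm (q - 2) α t k :=
    hCfun α t
  rw [hCfun', hCfun', ← mul_sub, abs_mul, abs_of_pos hc, mul_assoc, mul_assoc]
  gcongr
  have hexp : -(q - 2 + 1) = -(q - 1) := by ring
  simpa only [hexp, mul_assoc] using hbound α hα s hs.1
end

section
/- Let q ≥ 3 and h*(α) = ((q-1)·C(q,α))^{1/(q-2)} where C(q,α) = (2C₁/((q-1)(q-2))) Σ_{k≥0} [ (2k+2α)^{-(q-2)} + (2k+2-2α)^{-(q-2)} - 2(2k+2)^{-(q-2)} ], C₁ > 0. Then there exist constants 0 < c̄₁ < c̄₂ (depending only on q and C₁) such that c̄₁/α ≤ h*(α) ≤ c̄₂/α for every α ∈ (0,1/2]. In particular h*(α) → +∞ as α → 0⁺. -/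
open Real Set Filter Topology

lemma sum_bound_aux (r α : ℝ) (hr : 1 ≤ r) (hα : 0 < α) (hα2 : α ≤ 1/2) :
    Summable (fun k : ℕ => ((2*(k:ℝ)+2*α)^(-r) + (2*(k:ℝ)+2-2*α)^(-r) - 2*(2*(k:ℝ)+2)^(-r)))
    ∧ (1/2) * (2*α)^(-r) ≤
      ∑' k : ℕ, ((2*(k:ℝ)+2*α)^(-r) + (2*(k:ℝ)+2-2*α)^(-r) - 2*(2*(k:ℝ)+2)^(-r))
    ∧ (∑' k : ℕ, ((2*(k:ℝ)+2*α)^(-r) + (2*(k:ℝ)+2-2*α)^(-r) - 2*(2*(k:ℝ)+2)^(-r)))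
        ≤ 3 * (2*α)^(-r) := by
  have hrpos : 0 < r := lt_of_lt_of_le one_pos hr
  have hrneg : -r ≤ 0 := by linarith
  set T : ℕ → ℝ :=
    fun k => ((2*(k:ℝ)+2*α)^(-r) + (2*(k:ℝ)+2-2*α)^(-r) - 2*(2*(k:ℝ)+2)^(-r)) with hT
  have hmono : ∀ {x y : ℝ}, 0 < x → x ≤ y → y ^ (-r) ≤ x ^ (-r) := fun hx hxy =>
    Real.rpow_le_rpow_of_nonpos hx hxy hrneg
  -- basic positivity facts
  have hb1 : ∀ k : ℕ, (0:ℝ) < 2*(k:ℝ)+2*α := by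
    intro k; have : (0:ℝ) ≤ (k:ℝ) := Nat.cast_nonneg k; linarith
  have hb2 : ∀ k : ℕ, (0:ℝ) < 2*(k:ℝ)+2-2*α := by
    intro k; have : (0:ℝ) ≤ (k:ℝ) := Nat.cast_nonneg k; linarith
  have hb3 : ∀ k : ℕ, (0:ℝ) < 2*(k:ℝ)+2 := by
    intro k; have : (0:ℝ) ≤ (k:ℝ) := Nat.cast_nonneg k; linarith
  -- nonnegativity of each term
  have hTnonneg : ∀ k : ℕ, 0 ≤ T k := by
    intro k
    have h1 : (2*(k:ℝ)+2)^(-r) ≤ (2*(k:ℝ)+2*α)^(-r) := hmono (hb1 k) (by linarith)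
    have h2 : (2*(k:ℝ)+2)^(-r) ≤ (2*(k:ℝ)+2-2*α)^(-r) := hmono (hb2 k) (by linarith)
    simp only [hT]; linarith
  -- one ≤ f(2α)
  have h2α : (0:ℝ) < 2*α := by linarith
  have hone : (1:ℝ) ≤ (2*α)^(-r) :=
    Real.one_le_rpow_of_pos_of_le_one_of_nonpos h2α (by linarith) hrneg
  -- f 2 ≤ 1/2
  have hf2 : (2:ℝ)^(-r) ≤ 1/2 := by
    have : (2:ℝ)^(-r) ≤ (2:ℝ)^(-(1:ℝ)) :=
      Real.rpow_le_rpow_of_exponent_le (by norm_num) (by linarith)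
    rw [Real.rpow_neg_one] at this; linarith
  -- term 0 lower bound
  have hT0 : (1/2) * (2*α)^(-r) ≤ T 0 := by
    have h1 : (2:ℝ)^(-r) ≤ (2-2*α)^(-r) := hmono (by linarith) (by linarith)
    have e1 : (2*(0:ℕ)+2*α : ℝ) = 2*α := by push_cast; ring
    have e2 : (2*(0:ℕ)+2-2*α : ℝ) = 2-2*α := by push_cast; ring
    have e3 : (2*(0:ℕ)+2 : ℝ) = 2 := by push_cast; ring
    simp only [hT, e1, e2, e3]
    linarith
  -- partial sums bounded: ∑_{i<n} T i ≤ (2α)^(-r) + 1 + 2 * 2^(-r) - 2*(2n)^... ; we prove ≤ (2α)^(-r)+2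
  have hpartial : ∀ n : ℕ, (∑ i ∈ Finset.range n, T i) ≤ (2*α)^(-r) + 2 := by
    have key : ∀ n : ℕ, (∑ i ∈ Finset.range (n+1), T i)
        ≤ (2*α)^(-r) + 1 + 2*(2:ℝ)^(-r) - 2*(2*((n:ℝ)+1))^(-r) := by
      intro n
      induction n with
      | zero =>
        rw [Finset.sum_range_one]
        have h1 : (2-2*α:ℝ)^(-r) ≤ 1 :=
          Real.rpow_le_one_of_one_le_of_nonpos (by linarith) hrneg
        have e1 : (2*(0:ℕ)+2*α : ℝ) = 2*α := by push_cast; ring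
        have e2 : (2*(0:ℕ)+2-2*α : ℝ) = 2-2*α := by push_cast; ring
        have e3 : (2*(0:ℕ)+2 : ℝ) = 2 := by push_cast; ring
        simp only [hT, e1, e2, e3]
        have hf2nonneg : (0:ℝ) ≤ (2:ℝ)^(-r) := Real.rpow_nonneg (by norm_num) _
        norm_num
        linarith
      | succ n ih =>
        rw [Finset.sum_range_succ]
        have hk : (0:ℝ) < 2*((n:ℝ)+1) := by positivity
        have h1 : (2*(((n+1:ℕ)):ℝ)+2*α)^(-r) ≤ (2*((n:ℝ)+1))^(-r) :=
          hmono hk (by push_cast; linarith)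
        have h2 : (2*(((n+1:ℕ)):ℝ)+2-2*α)^(-r) ≤ (2*((n:ℝ)+1))^(-r) :=
          hmono hk (by push_cast; linarith)
        have e5 : (2*(((n+1:ℕ)):ℝ)+2 : ℝ) = 2*(((n+1:ℕ):ℝ)+1) := by push_cast; ring
        have hTle : T (n+1) ≤ 2*(2*((n:ℝ)+1))^(-r) - 2*(2*(((n+1:ℕ):ℝ)+1))^(-r) := by
          simp only [hT]
          rw [← e5]
          linarith
        linarith
    intro n
    cases n with
    | zero => simp; linarith
    | succ n =>
      have h := key n
      have hnn : (0:ℝ) ≤ (2*((n:ℝ)+1))^(-r) := Real.rpow_nonneg (by positivity) _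
      linarith
  have hsummable : Summable T := summable_of_sum_range_le hTnonneg hpartial
  refine ⟨hsummable, ?_, ?_⟩
  · calc (1/2) * (2*α)^(-r) ≤ T 0 := hT0
      _ ≤ ∑' k, T k := Summable.le_tsum hsummable 0 (fun j _ => hTnonneg j)
  · have := Real.tsum_le_of_sum_range_le hTnonneg hpartial
    calc (∑' k, T k) ≤ (2*α)^(-r) + 2 := this
      _ ≤ 3 * (2*α)^(-r) := by linarith

theorem stmt12 (q C₁ : ℝ) (hq : 3 ≤ q) (hC₁ : 0 < C₁)
    (Cfun hstar : ℝ → ℝ)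
    (hCfun : ∀ α : ℝ, Cfun α = (2*C₁/((q-1)*(q-2))) *
      ∑' k : ℕ, ((2*(k:ℝ)+2*α)^(-(q-2)) + (2*(k:ℝ)+2-2*α)^(-(q-2)) - 2*(2*(k:ℝ)+2)^(-(q-2))))
    (hhstar : ∀ α : ℝ, hstar α = ((q-1) * Cfun α)^(1/(q-2))) :
    (∃ c₁ c₂ : ℝ, 0 < c₁ ∧ c₁ < c₂ ∧
      ∀ α ∈ Set.Ioc (0:ℝ) (1/2), c₁/α ≤ hstar α ∧ hstar α ≤ c₂/α) ∧
    Filter.Tendsto hstar (nhdsWithin 0 (Set.Ioi 0)) Filter.atTop := by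
  set r : ℝ := q - 2 with hrdef
  have hr : 1 ≤ r := by simp only [hrdef]; linarith
  have hrpos : 0 < r := lt_of_lt_of_le one_pos hr
  have hq1 : (0:ℝ) < q - 1 := by linarith
  set K : ℝ := 2*C₁/((q-1)*(q-2)) with hK
  have hKpos : 0 < K := by
    apply div_pos (by linarith) (by positivity)
  set A : ℝ := (q-1)*K*(1/2) with hA
  set B : ℝ := (q-1)*K*3 with hB
  have hApos : 0 < A := by positivity
  have hBpos : 0 < B := by positivity
  have hAB : A < B := by
    rw [hA, hB]
    have : (0:ℝ) < (q-1)*K := by positivity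
    nlinarith
  set c₁ : ℝ := A^(1/r)/2 with hc₁
  set c₂ : ℝ := B^(1/r)/2 with hc₂
  have hc₁pos : 0 < c₁ := by
    have := Real.rpow_pos_of_pos hApos (1/r); positivity
  have hc₁₂ : c₁ < c₂ := by
    have := Real.rpow_lt_rpow hApos.le hAB (by positivity : (0:ℝ) < 1/r)
    rw [hc₁, hc₂]; linarith
  -- the identity (c * (2α)^(-r))^(1/r) = c^(1/r)/(2α)
  have hid : ∀ c α : ℝ, 0 ≤ c → 0 < α → (c * (2*α)^(-r))^(1/r) = c^(1/r)/(2*α) := by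
    intro c α hc hαpos
    have h2α : (0:ℝ) < 2*α := by linarith
    rw [Real.mul_rpow hc (Real.rpow_nonneg h2α.le _), ← Real.rpow_mul h2α.le]
    have : -r * (1/r) = -1 := by field_simp
    rw [this, Real.rpow_neg_one]; ring
  -- the main two-sided bound on Ioc 0 (1/2)
  have hbound : ∀ α ∈ Set.Ioc (0:ℝ) (1/2), c₁/α ≤ hstar α ∧ hstar α ≤ c₂/α := by
    rintro α ⟨hαpos, hα2⟩
    obtain ⟨hsum, hlow, hup⟩ := sum_bound_aux r α hr hαpos hα2
    have h2α : (0:ℝ) < 2*α := by linarith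
    have hX : (0:ℝ) < (2*α)^(-r) := Real.rpow_pos_of_pos h2α _
    have hlowC : A * (2*α)^(-r) ≤ (q-1) * Cfun α := by
      rw [hCfun α, hA]
      linarith [mul_le_mul_of_nonneg_left hlow (by positivity : (0:ℝ) ≤ (q-1)*K)]
    have hupC : (q-1) * Cfun α ≤ B * (2*α)^(-r) := by
      rw [hCfun α, hB]
      linarith [mul_le_mul_of_nonneg_left hup (by positivity : (0:ℝ) ≤ (q-1)*K)]
    have hstareq : hstar α = ((q-1) * Cfun α)^(1/r) := by rw [hhstar α, hrdef]
    constructor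
    · have h1 : (A * (2*α)^(-r))^(1/r) ≤ ((q-1) * Cfun α)^(1/r) :=
        Real.rpow_le_rpow (by positivity) hlowC (by positivity)
      rw [hid A α hApos.le hαpos] at h1
      rw [hstareq]
      calc c₁/α = A^(1/r)/(2*α) := by rw [hc₁]; field_simp
        _ ≤ _ := h1
    · have h1 : ((q-1) * Cfun α)^(1/r) ≤ (B * (2*α)^(-r))^(1/r) :=
        Real.rpow_le_rpow (le_trans (by positivity) hlowC) hupC (by positivity)
      rw [hid B α hBpos.le hαpos] at h1
      rw [hstareq]
      calc ((q-1) * Cfun α)^(1/r) ≤ B^(1/r)/(2*α) := h1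
        _ = c₂/α := by rw [hc₂]; field_simp
  refine ⟨⟨c₁, c₂, hc₁pos, hc₁₂, hbound⟩, ?_⟩
  have htend : Tendsto (fun α : ℝ => c₁/α) (𝓝[>] (0:ℝ)) atTop := by
    simp only [div_eq_mul_inv]
    exact Tendsto.const_mul_atTop hc₁pos tendsto_inv_nhdsGT_zero
  apply tendsto_atTop_mono' _ _ htend
  have hmem : Set.Ioc (0:ℝ) (1/2) ∈ 𝓝[>] (0:ℝ) :=
    Ioc_mem_nhdsGT_of_mem (by constructor <;> norm_num)
  filter_upwards [hmem] with α hα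
  exact (hbound α hα).1
end

section
/- Let q > 2 and α ∈ (0, 1/2]. With A₁, A₂, A₃ as in the strict-convexity computation (A₁ = Σ_{k≥0}[(2k+2α)^{-q}+(2k+2-2α)^{-q}], A₂ = Σ_{k≥0}[(2k+2α)^{-(q-2)}+(2k+2-2α)^{-(q-2)}-2(2k+2)^{-(q-2)}], A₃ = Σ_{k≥0}[(2k+2α)^{-(q-1)}-(2k+2-2α)^{-(q-1)}]), there exists a constant C > 0 depending only on q such that A₁·A₂ - A₃² ≥ C·α^{-(q-2)} for all α ∈ (0,1/2]. -/
/-!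
Only the first terms of the three series matter. With `u = (2α)^(-(q-1))`, the first term of `A₁`
gives `A₁ ≥ (2α)^(-q)`, and `A₂ ≥ (2α)^(-(q-2))` because `A₂` is the telescoping series of
`(2k+2α)^(-(q-2))` plus nonnegative second differences of the convex function `x ↦ x^(-(q-2))`;
hence `A₁ A₂ ≥ u²`. The terms of `A₃` alternate along the increasing points
`2α ≤ 2-2α ≤ 2+2α ≤ 4-2α ≤ ⋯`, so `0 ≤ A₃ ≤ u - d` with
`d = (2-2α)^(-(q-1)) - (2+2α)^(-(q-1)) ≥ 4α·4^(-(q-1))` (Bernoulli). Therefore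
`A₁ A₂ - A₃² ≥ u² - (u-d)² ≥ u d ≥ 4·8^(-(q-1))·α^(-(q-2))`.
-/

open Real Set Filter Topology

lemma summable_two_mul_add_rpow_neg {c s : ℝ} (hc : 0 < c) (hs : 1 < s) :
    Summable fun k : ℕ => (2 * (k : ℝ) + c) ^ (-s) := by
  refine (summable_nat_add_iff 1).mp ?_
  have hbase : Summable fun n : ℕ => ((n : ℝ) + 1) ^ (-s) := by
    simpa using (summable_nat_add_iff 1).mpr (summable_nat_rpow.mpr (by linarith))
  refine hbase.of_nonneg_of_le (fun n => (rpow_pos_of_pos (by positivity) _).le) fun n => ?_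
  exact rpow_le_rpow_of_nonpos (by positivity) (by push_cast; linarith) (by linarith)

lemma tendsto_two_mul_add_rpow_neg (c : ℝ) {s : ℝ} (hs : 0 < s) :
    Tendsto (fun k : ℕ => (2 * (k : ℝ) + c) ^ (-s)) atTop (𝓝 0) :=
  (tendsto_rpow_neg_atTop hs).comp <| tendsto_atTop_add_const_right _ c <|
    tendsto_natCast_atTop_atTop.const_mul_atTop two_pos

lemma antitone_two_mul_add_rpow_neg {c s : ℝ} (hc : 0 < c) (hs : 0 ≤ s) :
    Antitone fun k : ℕ => (2 * (k : ℝ) + c) ^ (-s) := fun _ _ hkl =>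
  rpow_le_rpow_of_nonpos (by positivity) (by gcongr) (by linarith)

lemma Antitone.hasSum_sub_succ {g : ℕ → ℝ} (hg : Antitone g) (hg0 : Tendsto g atTop (𝓝 0)) :
    HasSum (fun n => g n - g (n + 1)) (g 0) := by
  rw [hasSum_iff_tendsto_nat_of_nonneg fun n => sub_nonneg.2 (hg n.le_succ)]
  simp_rw [Finset.sum_range_sub']
  simpa using tendsto_const_nhds.sub hg0

lemma le_tsum_add_sub_two_mul {g h m : ℕ → ℝ} (hg : Antitone g) (hg0 : Tendsto g atTop (𝓝 0))
    (hh : Antitone h) (hh0 : Tendsto h atTop (𝓝 0)) (hgm : ∀ k, g (k + 1) ≤ m k)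
    (hhm : ∀ k, h (k + 1) ≤ m k) (hmid : ∀ k, 2 * m k ≤ g (k + 1) + h k) :
    g 0 ≤ ∑' k, (g k + h k - 2 * m k) := by
  -- the `k`-th term is `g k - g (k + 1)` plus `g (k + 1) + h k - 2 * m k ∈ [0, h k - h (k + 1)]`
  have hQ : Summable fun k => g (k + 1) + h k - 2 * m k :=
    (hh.hasSum_sub_succ hh0).summable.of_nonneg_of_le (fun k => by linarith [hmid k])
      fun k => by linarith [hgm k, hhm k]
  have hsplit : (fun k => g k + h k - 2 * m k)
      = fun k => (g k - g (k + 1)) + (g (k + 1) + h k - 2 * m k) := by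
    funext k; ring
  rw [hsplit, (hg.hasSum_sub_succ hg0).summable.tsum_add hQ, (hg.hasSum_sub_succ hg0).tsum_eq]
  exact le_add_of_nonneg_right (tsum_nonneg fun k => by linarith [hmid k])

lemma tsum_sub_le_of_le_shift {u v : ℕ → ℝ} (hu : Summable u) (hv : Summable v)
    (huv : ∀ k, u (k + 2) ≤ v (k + 1)) : ∑' k, (u k - v k) ≤ u 0 + u 1 - v 0 := by
  rw [hu.tsum_sub hv, ← hu.sum_add_tsum_nat_add 2, ← hv.sum_add_tsum_nat_add 1]
  have := ((summable_nat_add_iff 2).mpr hu).tsum_le_tsum huv ((summable_nat_add_iff 1).mpr hv)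
  simp only [Finset.sum_range_succ, Finset.range_one, Finset.sum_singleton]
  linarith

lemma two_mul_rpow_neg_le_add {x h s : ℝ} (hs : 0 ≤ s) (hxh : 0 < x - h) (hxh' : 0 < x + h) :
    2 * x ^ (-s) ≤ (x - h) ^ (-s) + (x + h) ^ (-s) := by
  have hx : 0 < x := by linarith
  have hprod : (x * x) ^ (-s) ≤ ((x - h) * (x + h)) ^ (-s) :=
    rpow_le_rpow_of_nonpos (by positivity) (by nlinarith [sq_nonneg h]) (by linarith)
  rw [mul_rpow hxh.le hxh'.le, mul_rpow hx.le hx.le] at hprod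
  have hu := rpow_pos_of_pos hxh (-s)
  have hv := rpow_pos_of_pos hxh' (-s)
  have hw := rpow_pos_of_pos hx (-s)
  nlinarith [sq_nonneg ((x - h) ^ (-s) - (x + h) ^ (-s)),
    sq_nonneg ((x - h) ^ (-s) + (x + h) ^ (-s) - 2 * x ^ (-s))]

lemma sub_le_rpow_sub_rpow {a b r : ℝ} (ha : 1 ≤ a) (hab : a ≤ b) (hr : 1 ≤ r) :
    b - a ≤ b ^ r - a ^ r := by
  have ha₀ : 0 < a := by linarith
  have ht : 0 ≤ b / a - 1 := by rw [sub_nonneg, one_le_div ha₀]; exact hab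
  have hbern : 1 + r * (b / a - 1) ≤ (b / a) ^ r := by
    simpa only [add_sub_cancel] using
      one_add_mul_self_le_rpow_one_add (s := b / a - 1) (by linarith) hr
  have har : a ≤ a ^ r := by simpa using rpow_le_rpow_of_exponent_le ha hr
  calc b - a = a * (b / a - 1) := by field_simp
    _ ≤ a ^ r * (r * (b / a - 1)) := mul_le_mul har (le_mul_of_one_le_left ht hr) ht (by positivity)
    _ ≤ a ^ r * ((b / a) ^ r - 1) := by gcongr; linarith
    _ = b ^ r - a ^ r := by
      rw [div_rpow (by linarith) ha₀.le, mul_sub, mul_div_cancel₀ _ (rpow_pos_of_pos ha₀ r).ne']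
      ring

lemma sub_mul_rpow_neg_le_rpow_neg_sub {a b r : ℝ} (ha : 1 ≤ a) (hab : a ≤ b) (hr : 1 ≤ r) :
    (b - a) * (a * b) ^ (-r) ≤ a ^ (-r) - b ^ (-r) := by
  have ha₀ : 0 < a := by linarith
  have hb₀ : 0 < b := by linarith
  have hA := rpow_pos_of_pos ha₀ r
  have hB := rpow_pos_of_pos hb₀ r
  rw [rpow_neg (by positivity), rpow_neg ha₀.le, rpow_neg hb₀.le, mul_rpow ha₀.le hb₀.le,
    ← div_eq_mul_inv, inv_sub_inv hA.ne' hB.ne']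
  exact div_le_div_of_nonneg_right (sub_le_rpow_sub_rpow ha hab hr) (by positivity)

noncomputable def A₁ (q α : ℝ) : ℝ :=
  ∑' k : ℕ, ((2 * (k : ℝ) + 2 * α) ^ (-q) + (2 * (k : ℝ) + 2 - 2 * α) ^ (-q))

noncomputable def A₂ (q α : ℝ) : ℝ :=
  ∑' k : ℕ, ((2 * (k : ℝ) + 2 * α) ^ (-(q - 2)) + (2 * (k : ℝ) + 2 - 2 * α) ^ (-(q - 2))
    - 2 * (2 * (k : ℝ) + 2) ^ (-(q - 2)))

noncomputable def A₃ (q α : ℝ) : ℝ :=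
  ∑' k : ℕ, ((2 * (k : ℝ) + 2 * α) ^ (-(q - 1)) - (2 * (k : ℝ) + 2 - 2 * α) ^ (-(q - 1)))

section

variable {q α : ℝ}

lemma rpow_neg_le_A₁ (hq : 1 < q) (hα : 0 < α) (hα' : α < 1) : (2 * α) ^ (-q) ≤ A₁ q α := by
  have hsum : Summable fun k : ℕ =>
      (2 * (k : ℝ) + 2 * α) ^ (-q) + (2 * (k : ℝ) + 2 - 2 * α) ^ (-q) := by
    simp_rw [add_sub_assoc]
    exact (summable_two_mul_add_rpow_neg (by positivity) hq).add
      (summable_two_mul_add_rpow_neg (by linarith) hq)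
  have hpos : ∀ k : ℕ, 0 ≤ (2 * (k : ℝ) + 2 - 2 * α) ^ (-q) := fun k =>
    rpow_nonneg (by linarith [k.cast_nonneg (α := ℝ)]) _
  have h0 := hsum.le_tsum 0 fun k _ => add_nonneg (rpow_nonneg (by positivity) _) (hpos k)
  have := hpos 0
  simp only [CharP.cast_eq_zero, mul_zero, zero_add] at h0 this
  exact (le_add_of_nonneg_right this).trans h0

lemma rpow_neg_le_A₂ (hq : 2 < q) (hα : 0 < α) (hα' : α < 1) :
    (2 * α) ^ (-(q - 2)) ≤ A₂ q α := by
  have hs : 0 < q - 2 := by linarith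
  have key := le_tsum_add_sub_two_mul (m := fun k : ℕ => (2 * (k : ℝ) + 2) ^ (-(q - 2)))
    (antitone_two_mul_add_rpow_neg (by positivity : 0 < 2 * α) hs.le)
    (tendsto_two_mul_add_rpow_neg (2 * α) hs)
    (antitone_two_mul_add_rpow_neg (by linarith : 0 < 2 - 2 * α) hs.le)
    (tendsto_two_mul_add_rpow_neg (2 - 2 * α) hs)
    (fun k => rpow_le_rpow_of_nonpos (by positivity) (by push_cast; linarith) (by linarith))
    (fun k => rpow_le_rpow_of_nonpos (by positivity) (by push_cast; linarith) (by linarith))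
    fun k => by
      have := two_mul_rpow_neg_le_add (x := 2 * (k : ℝ) + 2) (h := 2 * α) hs.le
        (by linarith [k.cast_nonneg (α := ℝ)]) (by positivity)
      have e : 2 * ((k + 1 : ℕ) : ℝ) + 2 * α = 2 * (k : ℝ) + 2 + 2 * α := by push_cast; ring
      rw [e, ← add_sub_assoc]
      linarith
  simp only [CharP.cast_eq_zero, mul_zero, zero_add, ← add_sub_assoc] at key
  exact key

lemma A₃_nonneg (hq : 1 < q) (hα : 0 < α) (hα' : α ≤ 1 / 2) : 0 ≤ A₃ q α :=
  tsum_nonneg fun _ => sub_nonneg.2 <|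
    rpow_le_rpow_of_nonpos (by positivity) (by linarith) (by linarith)

lemma A₃_le (hq : 2 < q) (hα : 0 < α) (hα' : α < 1) :
    A₃ q α ≤ (2 * α) ^ (-(q - 1)) + (2 + 2 * α) ^ (-(q - 1)) - (2 - 2 * α) ^ (-(q - 1)) := by
  have hs : 1 < q - 1 := by linarith
  have key := tsum_sub_le_of_le_shift
    (summable_two_mul_add_rpow_neg (by positivity : 0 < 2 * α) hs)
    (summable_two_mul_add_rpow_neg (by linarith : 0 < 2 - 2 * α) hs)
    fun k => rpow_le_rpow_of_nonpos (by push_cast; linarith [k.cast_nonneg (α := ℝ)])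
      (by push_cast; linarith) (by linarith)
  simp only [Nat.cast_zero, Nat.cast_one, mul_zero, mul_one, zero_add, ← add_sub_assoc] at key
  exact key

lemma four_mul_rpow_neg_le_rpow_neg_sub (hq : 2 < q) (hα : 0 < α) (hα' : α ≤ 1 / 2) :
    4 * α * 4 ^ (-(q - 1)) ≤ (2 - 2 * α) ^ (-(q - 1)) - (2 + 2 * α) ^ (-(q - 1)) := by
  have key := sub_mul_rpow_neg_le_rpow_neg_sub (a := 2 - 2 * α) (b := 2 + 2 * α) (r := q - 1)
    (by linarith) (by linarith) (by linarith)
  calc 4 * α * 4 ^ (-(q - 1))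
        ≤ (2 + 2 * α - (2 - 2 * α)) * ((2 - 2 * α) * (2 + 2 * α)) ^ (-(q - 1)) := by
        rw [show 2 + 2 * α - (2 - 2 * α) = 4 * α by ring]
        exact mul_le_mul_of_nonneg_left
          (rpow_le_rpow_of_nonpos (by nlinarith) (by nlinarith) (by linarith)) (by positivity)
    _ ≤ _ := key

lemma le_A₁_mul_A₂_sub_A₃_sq (hq : 2 < q) (hα : 0 < α) (hα' : α ≤ 1 / 2) :
    4 * 8 ^ (-(q - 1)) * α ^ (-(q - 2)) ≤ A₁ q α * A₂ q α - A₃ q α ^ 2 := by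
  set u := (2 * α) ^ (-(q - 1))
  set d := (2 - 2 * α) ^ (-(q - 1)) - (2 + 2 * α) ^ (-(q - 1))
  have hu : u ^ 2 ≤ A₁ q α * A₂ q α := by
    have hsplit : u ^ 2 = (2 * α) ^ (-q) * (2 * α) ^ (-(q - 2)) := by
      rw [sq, ← rpow_add (by positivity), ← rpow_add (by positivity)]
      ring_nf
    rw [hsplit]
    exact mul_le_mul (rpow_neg_le_A₁ (by linarith) hα (by linarith))
      (rpow_neg_le_A₂ hq hα (by linarith)) (by positivity)
      ((rpow_pos_of_pos (by positivity) _).le.trans (rpow_neg_le_A₁ (by linarith) hα (by linarith)))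
  have hA₃ : 0 ≤ A₃ q α := A₃_nonneg (by linarith) hα hα'
  have hA₃u : A₃ q α ≤ u - d := by linarith [A₃_le hq hα (by linarith)]
  have hd : 4 * α * 4 ^ (-(q - 1)) ≤ d := four_mul_rpow_neg_le_rpow_neg_sub hq hα hα'
  have hdu : d ≤ u := by
    have := rpow_le_rpow_of_nonpos (z := -(q - 1)) (by positivity : 0 < 2 * α)
      (by linarith : 2 * α ≤ 2 - 2 * α) (by linarith)
    linarith [rpow_pos_of_pos (by positivity : (0:ℝ) < 2 + 2 * α) (-(q - 1))]
  have hud : u * d ≤ A₁ q α * A₂ q α - A₃ q α ^ 2 := by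
    have hd₀ : 0 ≤ d := le_trans (by positivity) hd
    nlinarith [pow_le_pow_left₀ hA₃ hA₃u 2, mul_le_mul_of_nonneg_left hdu hd₀]
  have hu_eq : u = 2 ^ (-(q - 1)) * α ^ (-(q - 1)) := mul_rpow (by norm_num) hα.le
  calc 4 * 8 ^ (-(q - 1)) * α ^ (-(q - 2)) = u * (4 * α * 4 ^ (-(q - 1))) := by
        rw [show (8 : ℝ) = 2 * 4 by norm_num, mul_rpow (by norm_num) (by norm_num), hu_eq,
          show -(q - 2) = -(q - 1) + 1 by ring, rpow_add_one hα.ne']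
        ring
    _ ≤ u * d := mul_le_mul_of_nonneg_left hd (by positivity)
    _ ≤ _ := hud

end

theorem stmt16 (q : ℝ) (hq : 2 < q) :
    ∃ C > 0, ∀ α ∈ Set.Ioc (0:ℝ) (1/2),
      (∑' k : ℕ, ((2*(k:ℝ)+2*α)^(-q) + (2*(k:ℝ)+2-2*α)^(-q))) *
        (∑' k : ℕ, ((2*(k:ℝ)+2*α)^(-(q-2)) + (2*(k:ℝ)+2-2*α)^(-(q-2))
          - 2*(2*(k:ℝ)+2)^(-(q-2)))) -
        (∑' k : ℕ, ((2*(k:ℝ)+2*α)^(-(q-1)) - (2*(k:ℝ)+2-2*α)^(-(q-1))))^2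
      ≥ C * α^(-(q-2)) :=
  ⟨4 * 8 ^ (-(q - 1)), by positivity, fun _ hα => le_A₁_mul_A₂_sub_A₃_sq hq hα.1 hα.2⟩
end
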